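/- Let f₂ ∈ ℝ, f₁ > 0, f₀ > 0, ζ ∈ ℝ, and k ≠ 0, and define F : [0, ∞) → ℝ by F(Ω) := (Ω³ + f₂Ω² − f₁Ω + f₀)/(ζ²Ω + k²). Then the cubic H(Ω) := 2ζ²Ω³ + (ζ²f₂ + 3k²)Ω² + 2k²f₂Ω − (ζ²f₀ + k²f₁) has exactly one positive real root Ω_p, the function F attains its global minimum over [0, ∞) at the unique point Ω_p, and F(Ω_p) < F(0). -/

import Mathlib

/-- `F(Ω) = (Ω³ + f₂Ω² − f₁Ω + f₀)/(ζ²Ω + k²)`. -/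
noncomputable def Ffun (f₂ f₁ f₀ ζ k : ℝ) (Ω : ℝ) : ℝ :=
  (Ω ^ 3 + f₂ * Ω ^ 2 - f₁ * Ω + f₀) / (ζ ^ 2 * Ω + k ^ 2)

/-- `H(Ω) = 2ζ²Ω³ + (ζ²f₂ + 3k²)Ω² + 2k²f₂Ω − (ζ²f₀ + k²f₁)`, the numerator of `F'`. -/
def Hfun (f₂ f₁ f₀ ζ k : ℝ) (Ω : ℝ) : ℝ :=
  2 * ζ ^ 2 * Ω ^ 3 + (ζ ^ 2 * f₂ + 3 * k ^ 2) * Ω ^ 2 + 2 * k ^ 2 * f₂ * Ω -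
    (ζ ^ 2 * f₀ + k ^ 2 * f₁)

/-!
`H(0) = -(ζ²f₀ + k²f₁) < 0` and `H` is eventually positive, so `H` has a positive root `Ω_p`.
Since `H(Ω) / (Ω(ζ²Ω + 2k²))` is strictly increasing on `(0, ∞)`, `H` is negative on `(0, Ω_p)`
and positive on `(Ω_p, ∞)`. As `F' = H / (ζ²Ω + k²)²`, the function `F` strictly decreases on
`[0, Ω_p]` and strictly increases on `[Ω_p, ∞)`.
-/

open Set

theorem apply_lt_apply_of_deriv_neg_of_deriv_pos {f : ℝ → ℝ} {a p : ℝ} (hap : a ≤ p)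
    (hf : ContinuousOn f (Ici a)) (hneg : ∀ x ∈ Ioo a p, deriv f x < 0)
    (hpos : ∀ x ∈ Ioi p, 0 < deriv f x) {x : ℝ} (hx : a ≤ x) (hxp : x ≠ p) : f p < f x := by
  rcases hxp.lt_or_gt with h | h
  · have hanti : StrictAntiOn f (Icc a p) :=
      strictAntiOn_of_deriv_neg (convex_Icc a p) (hf.mono Icc_subset_Ici_self)
        (by rwa [interior_Icc])
    exact hanti ⟨hx, h.le⟩ ⟨hap, le_rfl⟩ h
  · have hmono : StrictMonoOn f (Ici p) :=
      strictMonoOn_of_deriv_pos (convex_Ici p) (hf.mono (Ici_subset_Ici.mpr hap))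
        (by rwa [interior_Ici])
    exact hmono self_mem_Ici h.le h

section

variable {f₂ f₁ f₀ ζ k : ℝ}

theorem Hfun_zero_neg (hf₁ : 0 < f₁) (hf₀ : 0 ≤ f₀) (hk : k ≠ 0) :
    Hfun f₂ f₁ f₀ ζ k 0 < 0 := by
  have : 0 < ζ ^ 2 * f₀ + k ^ 2 * f₁ := by positivity
  simp only [Hfun]
  linarith

theorem exists_pos_Hfun_pos (hk : k ≠ 0) : ∃ M, 0 < M ∧ 0 < Hfun f₂ f₁ f₀ ζ k M := by
  set c := ζ ^ 2 * f₀ + k ^ 2 * f₁ with hc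
  have hk2 : 0 < k ^ 2 := by positivity
  set M := |f₂| + |c| / k ^ 2 + 1 with hM
  have hf₂M : |f₂| + 1 ≤ M := by linarith [div_nonneg (abs_nonneg c) hk2.le]
  have hM1 : 1 ≤ M := by linarith [abs_nonneg f₂]
  have hMf₂ : 0 ≤ M + f₂ := by linarith [neg_abs_le f₂]
  have hkM : |c| < k ^ 2 * M := by
    rw [hM, mul_add, mul_add, mul_div_cancel₀ _ hk2.ne']
    nlinarith [abs_nonneg f₂]
  have hlower : k ^ 2 * M ^ 2 - c ≤ Hfun f₂ f₁ f₀ ζ k M := by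
    have hrest : Hfun f₂ f₁ f₀ ζ k M - (k ^ 2 * M ^ 2 - c) =
        ζ ^ 2 * M ^ 2 * (2 * M + f₂) + 2 * k ^ 2 * M * (M + f₂) := by
      rw [hc, Hfun]; ring
    have : 0 ≤ ζ ^ 2 * M ^ 2 * (2 * M + f₂) + 2 * k ^ 2 * M * (M + f₂) :=
      add_nonneg (mul_nonneg (by positivity) (by linarith))
        (mul_nonneg (mul_nonneg (by positivity) (by linarith)) hMf₂)
    linarith
  refine ⟨M, by linarith, ?_⟩
  nlinarith [mul_le_mul_of_nonneg_left hM1 (by positivity : 0 ≤ k ^ 2 * M), le_abs_self c]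

theorem Hfun_div_strictMonoOn (hf₁ : 0 ≤ f₁) (hf₀ : 0 ≤ f₀) (hk : k ≠ 0) :
    StrictMonoOn (fun Ω => Hfun f₂ f₁ f₀ ζ k Ω / (Ω * (ζ ^ 2 * Ω + 2 * k ^ 2))) (Ioi 0) := by
  intro a (ha : 0 < a) b (hb : 0 < b) hab
  rw [div_lt_div_iff₀ (by positivity) (by positivity)]
  have hcross : Hfun f₂ f₁ f₀ ζ k b * (a * (ζ ^ 2 * a + 2 * k ^ 2)) -
      Hfun f₂ f₁ f₀ ζ k a * (b * (ζ ^ 2 * b + 2 * k ^ 2)) =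
      (b - a) * (2 * ζ ^ 4 * a ^ 2 * b ^ 2 + 4 * ζ ^ 2 * k ^ 2 * (a * b) * (a + b) +
        6 * k ^ 4 * (a * b) + (ζ ^ 2 * f₀ + k ^ 2 * f₁) * (ζ ^ 2 * (a + b) + 2 * k ^ 2)) := by
    unfold Hfun; ring
  have hfactor : 0 < 2 * ζ ^ 4 * a ^ 2 * b ^ 2 + 4 * ζ ^ 2 * k ^ 2 * (a * b) * (a + b) +
      6 * k ^ 4 * (a * b) + (ζ ^ 2 * f₀ + k ^ 2 * f₁) * (ζ ^ 2 * (a + b) + 2 * k ^ 2) := by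
    positivity
  nlinarith [mul_pos (sub_pos.2 hab) hfactor]

theorem Hfun_neg_of_lt (hf₁ : 0 ≤ f₁) (hf₀ : 0 ≤ f₀) (hk : k ≠ 0) {p Ω : ℝ}
    (hp : Hfun f₂ f₁ f₀ ζ k p = 0) (hΩ : 0 < Ω) (hΩp : Ω < p) : Hfun f₂ f₁ f₀ ζ k Ω < 0 := by
  have h := Hfun_div_strictMonoOn (f₂ := f₂) (ζ := ζ) hf₁ hf₀ hk hΩ (hΩ.trans hΩp : 0 < p) hΩp
  simp only [hp, zero_div] at h
  simpa using (div_lt_iff₀ (by positivity)).mp h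

theorem Hfun_pos_of_gt (hf₁ : 0 ≤ f₁) (hf₀ : 0 ≤ f₀) (hk : k ≠ 0) {p Ω : ℝ}
    (hp : Hfun f₂ f₁ f₀ ζ k p = 0) (hp0 : 0 < p) (hpΩ : p < Ω) : 0 < Hfun f₂ f₁ f₀ ζ k Ω := by
  have hΩ : 0 < Ω := hp0.trans hpΩ
  have h := Hfun_div_strictMonoOn (f₂ := f₂) (ζ := ζ) hf₁ hf₀ hk hp0 hΩ hpΩ
  simp only [hp, zero_div] at h
  exact (div_pos_iff_of_pos_right (by positivity)).mp h

theorem hasDerivAt_Ffun {Ω : ℝ} (h : ζ ^ 2 * Ω + k ^ 2 ≠ 0) :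
    HasDerivAt (Ffun f₂ f₁ f₀ ζ k) (Hfun f₂ f₁ f₀ ζ k Ω / (ζ ^ 2 * Ω + k ^ 2) ^ 2) Ω := by
  have hnum : HasDerivAt (fun x : ℝ => x ^ 3 + f₂ * x ^ 2 - f₁ * x + f₀)
      (3 * Ω ^ 2 + 2 * f₂ * Ω - f₁) Ω := by
    refine ((((hasDerivAt_pow 3 Ω).add ((hasDerivAt_pow 2 Ω).const_mul f₂)).sub
      ((hasDerivAt_id Ω).const_mul f₁)).add_const f₀).congr_deriv ?_
    push_cast; ring
  have hden : HasDerivAt (fun x : ℝ => ζ ^ 2 * x + k ^ 2) (ζ ^ 2) Ω := by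
    simpa using ((hasDerivAt_id Ω).const_mul (ζ ^ 2)).add_const (k ^ 2)
  refine (hnum.div hden h).congr_deriv ?_
  unfold Hfun
  ring

theorem eq_of_Hfun_eq_zero (hf₁ : 0 ≤ f₁) (hf₀ : 0 ≤ f₀) (hk : k ≠ 0) {p Ω : ℝ}
    (hp : Hfun f₂ f₁ f₀ ζ k p = 0) (hp0 : 0 < p) (hΩ : 0 < Ω) (hΩ0 : Hfun f₂ f₁ f₀ ζ k Ω = 0) :
    Ω = p := by
  by_contra hne
  rcases lt_or_gt_of_ne hne with h | h
  · exact (Hfun_neg_of_lt hf₁ hf₀ hk hp hΩ h).ne hΩ0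
  · exact (Hfun_pos_of_gt hf₁ hf₀ hk hp hp0 h).ne' hΩ0

theorem Ffun_lt_of_Hfun_eq_zero (hf₁ : 0 ≤ f₁) (hf₀ : 0 ≤ f₀) (hk : k ≠ 0) {p Ω : ℝ}
    (hp : Hfun f₂ f₁ f₀ ζ k p = 0) (hp0 : 0 < p) (hΩ : 0 ≤ Ω) (hΩp : Ω ≠ p) :
    Ffun f₂ f₁ f₀ ζ k p < Ffun f₂ f₁ f₀ ζ k Ω := by
  have hden : ∀ x, 0 ≤ x → 0 < (ζ ^ 2 * x + k ^ 2) ^ 2 := fun x hx => by positivity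
  have hderiv : ∀ x, 0 ≤ x → HasDerivAt (Ffun f₂ f₁ f₀ ζ k)
      (Hfun f₂ f₁ f₀ ζ k x / (ζ ^ 2 * x + k ^ 2) ^ 2) x :=
    fun x hx => hasDerivAt_Ffun (by positivity)
  refine apply_lt_apply_of_deriv_neg_of_deriv_pos hp0.le
    (fun x hx => (hderiv x hx).continuousAt.continuousWithinAt) (fun x hx => ?_)
    (fun x (hx : p < x) => ?_) hΩ hΩp
  · rw [(hderiv x hx.1.le).deriv]
    exact div_neg_of_neg_of_pos (Hfun_neg_of_lt hf₁ hf₀ hk hp hx.1 hx.2) (hden x hx.1.le)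
  · rw [(hderiv x (hp0.trans hx).le).deriv]
    exact div_pos (Hfun_pos_of_gt hf₁ hf₀ hk hp hp0 hx) (hden x (hp0.trans hx).le)

end

/-- `H` has exactly one positive real root `Ω_p`, `F` attains its global
minimum over `[0,∞)` uniquely at `Ω_p`, and `F(Ω_p) < F(0)`. -/
theorem stmt12 (f₂ f₁ f₀ ζ k : ℝ) (hf₁ : 0 < f₁) (hf₀ : 0 < f₀) (hk : k ≠ 0) :
    ∃ Ωp : ℝ, 0 < Ωp ∧ Hfun f₂ f₁ f₀ ζ k Ωp = 0 ∧
      (∀ Ω : ℝ, 0 < Ω → Hfun f₂ f₁ f₀ ζ k Ω = 0 → Ω = Ωp) ∧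
      (∀ Ω : ℝ, 0 ≤ Ω → Ffun f₂ f₁ f₀ ζ k Ωp ≤ Ffun f₂ f₁ f₀ ζ k Ω) ∧
      (∀ Ω : ℝ, 0 ≤ Ω → Ω ≠ Ωp → Ffun f₂ f₁ f₀ ζ k Ωp < Ffun f₂ f₁ f₀ ζ k Ω) ∧
      Ffun f₂ f₁ f₀ ζ k Ωp < Ffun f₂ f₁ f₀ ζ k 0 := by
  obtain ⟨M, hM, hHM⟩ := exists_pos_Hfun_pos (f₂ := f₂) (f₁ := f₁) (f₀ := f₀) (ζ := ζ) hk
  have hH0 : Hfun f₂ f₁ f₀ ζ k 0 < 0 := Hfun_zero_neg hf₁ hf₀.le hk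
  obtain ⟨p, hpM, hp⟩ := intermediate_value_Icc hM.le
    (by unfold Hfun; fun_prop : Continuous (Hfun f₂ f₁ f₀ ζ k)).continuousOn ⟨hH0.le, hHM.le⟩
  have hp0 : 0 < p := hpM.1.lt_of_ne (by rintro rfl; linarith)
  have hmin := fun Ω => Ffun_lt_of_Hfun_eq_zero (Ω := Ω) hf₁.le hf₀.le hk hp hp0
  refine ⟨p, hp0, hp, fun Ω => eq_of_Hfun_eq_zero hf₁.le hf₀.le hk hp hp0, fun Ω hΩ => ?_,
    hmin, hmin 0 le_rfl hp0.ne⟩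
  rcases eq_or_ne Ω p with rfl | hne
  · exact le_rfl
  · exact (hmin Ω hΩ hne).le
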